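/- There exists a memoryless algorithm M : {L,R} × ℝ → ℝ that solves the exact midpoint localization problem for all algebraic lengths: for every real algebraic number D with 1 < D < ∞, the dynamics F_D induced by M maps [-D,D] into [-D,D], and for every x₀ ∈ [-D,D] there exists a finite integer n ≥ 0 such that F_D^n(x₀) = 0. (The same M must work simultaneously for all algebraic D > 1.) -/
import Mathlib


inductive Side
  | L
  | R

/-- The exact dynamics on `[-D, D]` induced by the memoryless algorithm `M`:
the walker at `x > 0` observes `(R, D - x)`, at `x < 0` observes `(L, D + x)`,
and moves by the displacement `M` prescribes; it stays at the midpoint `0`. -/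
noncomputable def step (M : Side × ℝ → ℝ) (D x : ℝ) : ℝ :=
  if 0 < x then x + M (Side.R, D - x)
  else if x < 0 then x + M (Side.L, D + x)
  else 0

noncomputable def lam : ℝ := liouvilleNumber 3

lemma lam_trans : Transcendental ℚ lam := by
  intro h
  exact transcendental_liouvilleNumber (by norm_num)
    ((IsFractionRing.isAlgebraic_iff ℤ ℚ ℝ).2 h)

lemma lam_pos : 0 < lam :=
  Summable.tsum_pos (LiouvilleNumber.summable (by norm_num)) (fun _ => by positivity) 0 (by norm_num)

lemma alg_mul {a b : ℝ} (ha : IsAlgebraic ℚ a) (hb : IsAlgebraic ℚ b) :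
    IsAlgebraic ℚ (a * b) :=
  isAlgebraic_iff_isIntegral.2 (ha.isIntegral.mul hb.isIntegral)

lemma alg_sub {a b : ℝ} (ha : IsAlgebraic ℚ a) (hb : IsAlgebraic ℚ b) :
    IsAlgebraic ℚ (a - b) :=
  isAlgebraic_iff_isIntegral.2 (ha.isIntegral.sub hb.isIntegral)

lemma two_alg : IsAlgebraic ℚ (2 : ℝ) := by
  have := isAlgebraic_rat (A := ℝ) ℚ 2
  simpa using this

lemma qlam_not_alg {q : ℚ} (hq : q ≠ 0) (h : IsAlgebraic ℚ ((q : ℝ) * lam)) : False := by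
  apply lam_trans
  have hne : ((q : ℝ)) ≠ 0 := by exact_mod_cast hq
  have heq : lam = ((q⁻¹ : ℚ) : ℝ) * ((q : ℝ) * lam) := by
    push_cast
    field_simp
  rw [heq]
  exact alg_mul (isAlgebraic_rat ℚ _) h

/-- The "tags": positive rational multiples of the Liouville number. -/
def Tagged (s : ℝ) : Prop := ∃ q : ℚ, 0 < q ∧ s = (q : ℝ) * lam

lemma tag_not_alg {s : ℝ} (h : Tagged s) : ¬ IsAlgebraic ℚ s := by
  obtain ⟨q, hq, rfl⟩ := h
  exact fun ha => qlam_not_alg hq.ne' ha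

lemma exists_tag {a b : ℝ} (h0 : 0 < a) (hab : a < b) :
    ∃ s, Tagged s ∧ a < s ∧ s < b := by
  obtain ⟨q, hq1, hq2⟩ := exists_rat_btwn (show a / lam < b / lam by gcongr; exact lam_pos)
  have hqpos : (0 : ℚ) < q := by
    have : (0 : ℝ) < q := lt_trans (div_pos h0 lam_pos) hq1
    exact_mod_cast this
  refine ⟨(q : ℝ) * lam, ⟨q, hqpos, rfl⟩, ?_, ?_⟩
  · exact (div_lt_iff₀ lam_pos).1 hq1
  · exact (lt_div_iff₀ lam_pos).1 hq2

lemma sigma_spec (d : ℝ) :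
    ∃ s, Tagged s ∧ 5 / 4 * max d 1 < s ∧ s < 3 / 2 * max d 1 := by
  have h1 : (1 : ℝ) ≤ max d 1 := le_max_right d 1
  exact exists_tag (by nlinarith) (by nlinarith)

noncomputable def sig (d : ℝ) : ℝ := (sigma_spec d).choose

lemma sig_tag (d : ℝ) : Tagged (sig d) := (sigma_spec d).choose_spec.1
lemma sig_lb (d : ℝ) : 5 / 4 * max d 1 < sig d := (sigma_spec d).choose_spec.2.1
lemma sig_ub (d : ℝ) : sig d < 3 / 2 * max d 1 := (sigma_spec d).choose_spec.2.2

lemma sig_gt1 (d : ℝ) : 1 < sig d := by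
  have := sig_lb d
  have h1 : (1 : ℝ) ≤ max d 1 := le_max_right d 1
  nlinarith

lemma sig_gt (d : ℝ) : d < sig d := by
  have := sig_lb d
  have h1 : (1 : ℝ) ≤ max d 1 := le_max_right d 1
  have h2 : d ≤ max d 1 := le_max_left d 1
  nlinarith

/-- Decodable observations on the left: those that uniquely decompose as `2*D' - q*lam`. -/
def Dec (e : ℝ) : Prop :=
  ∃ D' : ℝ, IsAlgebraic ℚ D' ∧ 1 < D' ∧ D' ≤ 2 * max e 1 ∧
    ∃ q : ℚ, 0 < q ∧ e = 2 * D' - (q : ℝ) * lam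

open scoped Classical in
/-- The memoryless algorithm. -/
noncomputable def Mfun : Side × ℝ → ℝ
  | (Side.R, d) => d - sig d
  | (Side.L, e) => if h : Dec e then h.choose - e else sig e - e

lemma dec_unique {e D' : ℝ} (h : Dec e) (h1 : IsAlgebraic ℚ D')
    (h2 : ∃ q : ℚ, 0 < q ∧ e = 2 * D' - (q : ℝ) * lam) : h.choose = D' := by
  obtain ⟨halg, _, _, q1, hq1, he1⟩ := h.choose_spec
  obtain ⟨q2, hq2, he2⟩ := h2
  by_cases hq : q1 = q2
  · subst hq
    linarith [he1, he2]
  · exfalso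
    apply qlam_not_alg (q := q1 - q2) (sub_ne_zero_of_ne hq)
    have heq : ((q1 - q2 : ℚ) : ℝ) * lam = 2 * h.choose - 2 * D' := by
      push_cast
      linear_combination he1 - he2
    rw [heq]
    exact alg_sub (alg_mul two_alg halg) (alg_mul two_alg h1)

lemma tag_not_dec {t : ℝ} (ht : Tagged t) : ¬ Dec t := by
  rintro ⟨D', halg, _, _, q, hq, he⟩
  obtain ⟨q0, hq0, rfl⟩ := ht
  apply qlam_not_alg (q := q0 + q) (by positivity)
  have heq : ((q0 + q : ℚ) : ℝ) * lam = 2 * D' := by push_cast; linear_combination he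
  rw [heq]
  exact alg_mul two_alg halg

lemma alg_not_dec {a : ℝ} (ha : IsAlgebraic ℚ a) : ¬ Dec a := by
  rintro ⟨D', halg, _, _, q, hq, he⟩
  apply qlam_not_alg (q := q) hq.ne'
  have heq : ((q : ℚ) : ℝ) * lam = 2 * D' - a := by linarith
  rw [heq]
  exact alg_sub (alg_mul two_alg halg) ha

lemma step_R {D x : ℝ} (hx : 0 < x) : step Mfun D x = D - sig (D - x) := by
  rw [step, if_pos hx]
  show x + ((D - x) - sig (D - x)) = D - sig (D - x)
  ring

lemma step_L_dec {D x : ℝ} (hx : x < 0) (h : Dec (D + x)) :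
    step Mfun D x = h.choose - D := by
  rw [step, if_neg (by linarith), if_pos hx]
  simp only [Mfun]
  rw [dif_pos h]
  ring

lemma step_L_ndec {D x : ℝ} (hx : x < 0) (h : ¬ Dec (D + x)) :
    step Mfun D x = sig (D + x) - D := by
  rw [step, if_neg (by linarith), if_pos hx]
  simp only [Mfun]
  rw [dif_neg h]
  ring

lemma step_kill {D x : ℝ} (hD : 1 < D) (hAlg : IsAlgebraic ℚ D) (hx : x < 0)
    (hx2 : -(D / 2) < x) (hs : Tagged (D - x)) : step Mfun D x = 0 := by
  obtain ⟨q, hq, hqe⟩ := hs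
  have hw : ∃ q : ℚ, 0 < q ∧ D + x = 2 * D - (q : ℝ) * lam :=
    ⟨q, hq, by linarith [hqe]⟩
  have hdec : Dec (D + x) := by
    refine ⟨D, hAlg, hD, ?_, hw⟩
    have h2 : D + x ≤ max (D + x) 1 := le_max_left _ _
    linarith
  rw [step_L_dec hx hdec, dec_unique hdec hAlg hw, sub_self]

lemma reach_right (D : ℝ) (hD : 1 < D) (hAlg : IsAlgebraic ℚ D) :
    ∀ n : ℕ, ∀ x : ℝ, 0 < x → x ≤ D → D ≤ (5 / 4) ^ n * max (D - x) 1 →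
      ∃ m : ℕ, (step Mfun D)^[m] x = 0 := by
  intro n
  induction n with
  | zero =>
    intro x hx _ hle
    rw [pow_zero, one_mul] at hle
    have h1 : max (D - x) 1 < D := max_lt (by linarith) hD
    linarith
  | succ n ih =>
    intro x hx hxD hle
    have hmaxlt : max (D - x) 1 < D := max_lt (by linarith) hD
    have hub := sig_ub (D - x)
    have hlb := sig_lb (D - x)
    have hs1 := sig_gt1 (D - x)
    have hsubD : sig (D - x) < 3 / 2 * D := by linarith
    have hstep : step Mfun D x = D - sig (D - x) := step_R hx
    rcases lt_trichotomy (sig (D - x)) D with hlt | heq | hgt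
    · have h1 : 0 < D - sig (D - x) := by linarith
      have h2 : D - sig (D - x) ≤ D := by linarith
      have h3 : D ≤ (5 / 4) ^ n * max (D - (D - sig (D - x))) 1 := by
        rw [show D - (D - sig (D - x)) = sig (D - x) by ring, max_eq_left hs1.le]
        have hpow : (0 : ℝ) ≤ (5 / 4) ^ n := by positivity
        calc D ≤ (5 / 4) ^ (n + 1) * max (D - x) 1 := hle
          _ = (5 / 4) ^ n * (5 / 4 * max (D - x) 1) := by ring
          _ ≤ (5 / 4) ^ n * sig (D - x) := by
              exact mul_le_mul_of_nonneg_left hlb.le hpow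
      obtain ⟨m, hm⟩ := ih _ h1 h2 h3
      exact ⟨m + 1, by rw [Function.iterate_succ_apply, hstep]; exact hm⟩
    · exact absurd (show IsAlgebraic ℚ (sig (D - x)) by rw [heq]; exact hAlg)
        (tag_not_alg (sig_tag (D - x)))
    · have hy : D - sig (D - x) < 0 := by linarith
      have hy2 : -(D / 2) < D - sig (D - x) := by linarith
      have htag : Tagged (D - (D - sig (D - x))) := by
        rw [show D - (D - sig (D - x)) = sig (D - x) by ring]
        exact sig_tag (D - x)
      refine ⟨2, ?_⟩
      rw [Function.iterate_succ_apply, hstep, Function.iterate_one]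
      exact step_kill hD hAlg hy hy2 htag

lemma reach_right' (D : ℝ) (hD : 1 < D) (hAlg : IsAlgebraic ℚ D) (x : ℝ)
    (hx : 0 < x) (hxD : x ≤ D) : ∃ m : ℕ, (step Mfun D)^[m] x = 0 := by
  obtain ⟨n, hn⟩ := pow_unbounded_of_one_lt D (by norm_num : (1 : ℝ) < 5 / 4)
  apply reach_right D hD hAlg n x hx hxD
  have h1 : (1 : ℝ) ≤ max (D - x) 1 := le_max_right _ _
  have hpow : (0 : ℝ) ≤ (5 / 4) ^ n := by positivity
  nlinarith

lemma reach_left (D : ℝ) (hD : 1 < D) (hAlg : IsAlgebraic ℚ D) :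
    ∀ n : ℕ, ∀ x : ℝ, -D ≤ x → x < 0 → ¬ Dec (D + x) →
      D ≤ (5 / 4) ^ n * max (D + x) 1 →
      ∃ m : ℕ, (step Mfun D)^[m] x = 0 := by
  intro n
  induction n with
  | zero =>
    intro x _ hx _ hle
    rw [pow_zero, one_mul] at hle
    have h1 : max (D + x) 1 < D := max_lt (by linarith) hD
    linarith
  | succ n ih =>
    intro x hx1 hx2 hnd hle
    have hmaxlt : max (D + x) 1 < D := max_lt (by linarith) hD
    have hub := sig_ub (D + x)
    have hlb := sig_lb (D + x)
    have hs1 := sig_gt1 (D + x)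
    have hsubD : sig (D + x) < 3 / 2 * D := by linarith
    have hstep : step Mfun D x = sig (D + x) - D := step_L_ndec hx2 hnd
    rcases lt_trichotomy (sig (D + x)) D with hlt | heq | hgt
    · have h1 : -D ≤ sig (D + x) - D := by linarith
      have h2 : sig (D + x) - D < 0 := by linarith
      have hnd' : ¬ Dec (D + (sig (D + x) - D)) := by
        rw [show D + (sig (D + x) - D) = sig (D + x) by ring]
        exact tag_not_dec (sig_tag (D + x))
      have h3 : D ≤ (5 / 4) ^ n * max (D + (sig (D + x) - D)) 1 := by
        rw [show D + (sig (D + x) - D) = sig (D + x) by ring, max_eq_left hs1.le]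
        have hpow : (0 : ℝ) ≤ (5 / 4) ^ n := by positivity
        calc D ≤ (5 / 4) ^ (n + 1) * max (D + x) 1 := hle
          _ = (5 / 4) ^ n * (5 / 4 * max (D + x) 1) := by ring
          _ ≤ (5 / 4) ^ n * sig (D + x) := by
              exact mul_le_mul_of_nonneg_left hlb.le hpow
      obtain ⟨m, hm⟩ := ih _ h1 h2 hnd' h3
      exact ⟨m + 1, by rw [Function.iterate_succ_apply, hstep]; exact hm⟩
    · exact absurd (show IsAlgebraic ℚ (sig (D + x)) by rw [heq]; exact hAlg)
        (tag_not_alg (sig_tag (D + x)))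
    · have h1 : 0 < sig (D + x) - D := by linarith
      have h2 : sig (D + x) - D ≤ D := by linarith
      obtain ⟨m, hm⟩ := reach_right' D hD hAlg _ h1 h2
      exact ⟨m + 1, by rw [Function.iterate_succ_apply, hstep]; exact hm⟩

lemma reach_left' (D : ℝ) (hD : 1 < D) (hAlg : IsAlgebraic ℚ D) (x : ℝ)
    (hx1 : -D ≤ x) (hx2 : x < 0) (hnd : ¬ Dec (D + x)) :
    ∃ m : ℕ, (step Mfun D)^[m] x = 0 := by
  obtain ⟨n, hn⟩ := pow_unbounded_of_one_lt D (by norm_num : (1 : ℝ) < 5 / 4)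
  apply reach_left D hD hAlg n x hx1 hx2 hnd
  have h1 : (1 : ℝ) ≤ max (D + x) 1 := le_max_right _ _
  have hpow : (0 : ℝ) ≤ (5 / 4) ^ n := by positivity
  nlinarith

theorem algebraic_length_solvable :
    ∃ M : Side × ℝ → ℝ, ∀ D : ℝ, 1 < D → IsAlgebraic ℚ D →
      (∀ x ∈ Set.Icc (-D) D, step M D x ∈ Set.Icc (-D) D) ∧
      (∀ x₀ ∈ Set.Icc (-D) D, ∃ n : ℕ, (step M D)^[n] x₀ = 0) := by
  refine ⟨Mfun, fun D hD hAlg => ⟨?_, ?_⟩⟩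
  · -- invariance
    rintro x ⟨hx1, hx2⟩
    rcases lt_trichotomy x 0 with h | h | h
    · have hmax : max (D + x) 1 < D := max_lt (by linarith) hD
      by_cases hdec : Dec (D + x)
      · rw [step_L_dec h hdec]
        obtain ⟨_, h1, h2, _⟩ := hdec.choose_spec
        exact ⟨by linarith, by linarith⟩
      · rw [step_L_ndec h hdec]
        have := sig_gt1 (D + x)
        have := sig_ub (D + x)
        exact ⟨by linarith, by linarith⟩
    · subst h
      have : step Mfun D 0 = 0 := by rw [step]; norm_num
      rw [this]
      exact ⟨by linarith, by linarith⟩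
    · rw [step_R h]
      have hmax : max (D - x) 1 < D := max_lt (by linarith) hD
      have := sig_gt1 (D - x)
      have := sig_ub (D - x)
      exact ⟨by linarith, by linarith⟩
  · -- termination
    rintro x₀ ⟨hx1, hx2⟩
    rcases lt_trichotomy x₀ 0 with h | h | h
    · by_cases hdec : Dec (D + x₀)
      · have hstep := step_L_dec h hdec
        obtain ⟨halg, hgt1, hle2, _⟩ := hdec.choose_spec
        have hmax : max (D + x₀) 1 < D := max_lt (by linarith) hD
        rcases lt_trichotomy hdec.choose D with hl | heqD | hg
        · have hnd : ¬ Dec (D + (hdec.choose - D)) := by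
            rw [show D + (hdec.choose - D) = hdec.choose by ring]
            exact alg_not_dec halg
          obtain ⟨m, hm⟩ := reach_left' D hD hAlg (hdec.choose - D)
            (by linarith) (by linarith) hnd
          exact ⟨m + 1, by rw [Function.iterate_succ_apply, hstep]; exact hm⟩
        · exact ⟨1, by rw [Function.iterate_one, hstep, heqD, sub_self]⟩
        · obtain ⟨m, hm⟩ := reach_right' D hD hAlg (hdec.choose - D)
            (by linarith) (by linarith)
          exact ⟨m + 1, by rw [Function.iterate_succ_apply, hstep]; exact hm⟩
      · exact reach_left' D hD hAlg x₀ hx1 h hdec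
    · exact ⟨0, by simpa using h⟩
    · exact reach_right' D hD hAlg x₀ h hx2
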